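/- arXiv:1312.1481 — 4 statements merged into one kernel-verified Lean document; each statement's English description precedes it below -/
import Mathlib

section
/- Let δ > 0 and let φ : ℝ² → ℂ be a smooth (C^∞) compactly supported function. Then ∫_{ℝ×(0,δ)} |φ(s,η)|² ds dη ≤ 2δ · ∫_ℝ |φ(s, 0)|² ds + δ² · ∫_{ℝ×(0,δ)} |∂₂φ(s,η)|² ds dη. -/
open MeasureTheory Set

-- Cauchy–Schwarz on an interval
lemma stmt5_cs {g : ℝ → ℝ} (hg : Continuous g) (hgs : HasCompactSupport g)
    (hg0 : ∀ x, 0 ≤ g x) {η : ℝ} (hη : 0 ≤ η) :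
    (∫ t in Set.Ioc (0:ℝ) η, g t) ^ 2 ≤ η * ∫ t in Set.Ioc (0:ℝ) η, g t ^ 2 := by
  set μ := (volume : Measure ℝ).restrict (Set.Ioc (0:ℝ) η)
  have hfin : IsFiniteMeasure μ := by
    constructor
    simp [μ, Measure.restrict_apply_univ]
  have hmem : MemLp g 2 μ := (hg.memLp_of_hasCompactSupport hgs).restrict _
  have hone : MemLp (fun _ : ℝ => (1:ℝ)) 2 μ := memLp_const 1
  have hpq : Real.HolderConjugate 2 2 := by constructor <;> norm_num
  have h := integral_mul_le_Lp_mul_Lq_of_nonneg (μ := μ) hpq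
      (Filter.Eventually.of_forall hg0)
      (Filter.Eventually.of_forall fun _ => zero_le_one)
      (by simpa [ENNReal.ofReal_ofNat] using hmem)
      (by simpa [ENNReal.ofReal_ofNat] using hone)
  simp only [mul_one, Real.one_rpow, integral_const, measureReal_def, Measure.restrict_apply_univ,
    Real.volume_Ioc, sub_zero, ENNReal.toReal_ofReal hη, smul_eq_mul, μ] at h
  have hrw : ∫ a, g a ^ (2:ℝ) ∂μ = ∫ t, g t ^ 2 ∂μ := by
    refine integral_congr_ae (Filter.Eventually.of_forall fun x => ?_)
    beta_reduce
    rw [← Real.rpow_natCast (g x) 2]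
    norm_num
  rw [hrw] at h
  have hInonneg : 0 ≤ ∫ t in Set.Ioc (0:ℝ) η, g t ^ 2 :=
    integral_nonneg fun x => sq_nonneg _
  calc (∫ t in Set.Ioc (0:ℝ) η, g t) ^ 2
      ≤ ((∫ t in Set.Ioc (0:ℝ) η, g t ^ 2) ^ ((1:ℝ)/2) * η ^ ((1:ℝ)/2)) ^ 2 := by
        exact pow_le_pow_left₀ (integral_nonneg fun x => hg0 x) h 2
    _ = η * ∫ t in Set.Ioc (0:ℝ) η, g t ^ 2 := by
        rw [mul_pow, ← Real.rpow_natCast ((∫ t in Set.Ioc (0:ℝ) η, g t ^ 2) ^ ((1:ℝ)/2)) 2,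
          ← Real.rpow_natCast (η ^ ((1:ℝ)/2)) 2, ← Real.rpow_mul hInonneg, ← Real.rpow_mul hη]
        norm_num [mul_comm]

lemma stmt5_emb (s : ℝ) : Topology.IsClosedEmbedding (Prod.mk s : ℝ → ℝ × ℝ) := by
  refine ⟨isEmbedding_prodMkRight s, ?_⟩
  have : Set.range (Prod.mk s : ℝ → ℝ × ℝ) = {s} ×ˢ Set.univ := by
    ext p; simp [Prod.ext_iff, eq_comm]
  rw [this]; exact isClosed_singleton.prod isClosed_univ

lemma stmt5_emb0 : Topology.IsClosedEmbedding (fun s : ℝ => (s, (0:ℝ))) := by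
  have h1 := (Homeomorph.prodComm ℝ ℝ).isClosedEmbedding.comp (stmt5_emb (0:ℝ))
  exact h1

lemma stmt5_pt (δ : ℝ) (hδ : 0 < δ) (φ : ℝ × ℝ → ℂ) (hφ : ContDiff ℝ (⊤ : ℕ∞) φ)
    (hsupp : HasCompactSupport φ) (s : ℝ) {η : ℝ} (hη : η ∈ Set.Ioo (0:ℝ) δ) :
    ‖φ (s, η)‖ ^ 2 ≤ 2 * ‖φ (s, 0)‖ ^ 2 +
      2 * η * ∫ t in Set.Ioo (0:ℝ) δ, ‖fderiv ℝ φ (s, t) (0, 1)‖ ^ 2 := by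
  obtain ⟨hη0, hηδ⟩ := hη
  set D : ℝ × ℝ → ℂ := fun p => fderiv ℝ φ p (0, 1) with hD
  have hDcont : Continuous D := (hφ.continuous_fderiv (by simp)).clm_apply continuous_const
  have hDsupp : HasCompactSupport D := hsupp.fderiv_apply ℝ (0, 1)
  have hemb := stmt5_emb s
  have hgsupp : HasCompactSupport fun t => ‖D (s, t)‖ :=
    (hDsupp.comp_isClosedEmbedding hemb).norm
  have hgcont : Continuous fun t => ‖D (s, t)‖ :=
    (hDcont.comp (continuous_const.prodMk continuous_id)).norm
  -- FTC
  have hftc : φ (s, η) - φ (s, 0) = ∫ t in (0:ℝ)..η, D (s, t) := by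
    rw [intervalIntegral.integral_eq_sub_of_hasDerivAt (f := fun t => φ (s, t))]
    · intro t _
      have h1 : HasDerivAt (fun t : ℝ => ((s : ℝ), t)) ((0 : ℝ), (1 : ℝ)) t :=
        (hasDerivAt_const t s).prodMk (hasDerivAt_id t)
      exact ((hφ.differentiable (by simp)) (s, t)).hasFDerivAt.comp_hasDerivAt t h1
    · exact (hDcont.comp (continuous_const.prodMk continuous_id)).intervalIntegrable 0 η
  have hbd : ‖φ (s, η)‖ ≤ ‖φ (s, 0)‖ + ∫ t in Set.Ioc (0:ℝ) η, ‖D (s, t)‖ := by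
    have : φ (s, η) = φ (s, 0) + ∫ t in (0:ℝ)..η, D (s, t) := by
      rw [← hftc]; ring
    rw [this]
    refine (norm_add_le _ _).trans (add_le_add_right ?_ _)
    rw [intervalIntegral.integral_of_le hη0.le]
    exact norm_integral_le_integral_norm _
  have hcs : (∫ t in Set.Ioc (0:ℝ) η, ‖D (s, t)‖) ^ 2 ≤
      η * ∫ t in Set.Ioc (0:ℝ) η, ‖D (s, t)‖ ^ 2 :=
    stmt5_cs hgcont hgsupp (fun x => norm_nonneg _) hη0.le
  have hmono : ∫ t in Set.Ioc (0:ℝ) η, ‖D (s, t)‖ ^ 2 ≤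
      ∫ t in Set.Ioo (0:ℝ) δ, ‖D (s, t)‖ ^ 2 := by
    refine setIntegral_mono_set ?_ ?_ ?_
    · exact ((hgcont.pow 2).integrable_of_hasCompactSupport
        (hgsupp.comp_left (g := fun x : ℝ => x ^ 2) (by simp) :)).integrableOn
    · exact Filter.Eventually.of_forall fun x => sq_nonneg _
    · exact Filter.Eventually.of_forall (Set.Ioc_subset_Ioo_right hηδ |>.trans
        (by intro x hx; exact ⟨hx.1, hx.2⟩))
  have h0 : 0 ≤ ∫ t in Set.Ioc (0:ℝ) η, ‖D (s, t)‖ := integral_nonneg fun x => norm_nonneg _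
  nlinarith [norm_nonneg (φ (s, 0)), norm_nonneg (φ (s, η)), sq_nonneg (‖φ (s,0)‖ - ∫ t in Set.Ioc (0:ℝ) η, ‖D (s, t)‖), mul_le_mul_of_nonneg_left hmono hη0.le]

/-- Poincaré-type estimate in a strip: for `φ` smooth and compactly supported,
`∫_{ℝ×(0,δ)} |φ|² ≤ 2δ ∫ |φ(s,0)|² ds + δ² ∫_{ℝ×(0,δ)} |∂₂φ|²`. -/
theorem stmt_5 (δ : ℝ) (hδ : 0 < δ) (φ : ℝ × ℝ → ℂ)
    (hφ : ContDiff ℝ (⊤ : ℕ∞) φ) (hsupp : HasCompactSupport φ) :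
    ∫ p in (Set.univ ×ˢ Set.Ioo (0 : ℝ) δ : Set (ℝ × ℝ)), ‖φ p‖ ^ 2 ≤
      2 * δ * (∫ s : ℝ, ‖φ (s, 0)‖ ^ 2) +
        δ ^ 2 * ∫ p in (Set.univ ×ˢ Set.Ioo (0 : ℝ) δ : Set (ℝ × ℝ)),
          ‖fderiv ℝ φ p (0, 1)‖ ^ 2 := by
  set D : ℝ × ℝ → ℂ := fun p => fderiv ℝ φ p (0, 1) with hD
  have hDcont : Continuous D := (hφ.continuous_fderiv (by simp)).clm_apply continuous_const
  have hDsupp : HasCompactSupport D := hsupp.fderiv_apply ℝ (0, 1)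
  -- integrability of the two squared functions on ℝ²
  have hfint : Integrable (fun p : ℝ × ℝ => ‖φ p‖ ^ 2) :=
    (hφ.continuous.norm.pow 2).integrable_of_hasCompactSupport
      (hsupp.norm.comp_left (g := fun x : ℝ => x ^ 2) (by simp) :)
  have hDint : Integrable (fun p : ℝ × ℝ => ‖D p‖ ^ 2) :=
    (hDcont.norm.pow 2).integrable_of_hasCompactSupport
      (hDsupp.norm.comp_left (g := fun x : ℝ => x ^ 2) (by simp) :)
  -- measure on the strip is a product
  have hmeq : (volume : Measure (ℝ × ℝ)).restrict (Set.univ ×ˢ Set.Ioo (0:ℝ) δ) =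
      (volume : Measure ℝ).prod (volume.restrict (Set.Ioo (0:ℝ) δ)) := by
    rw [Measure.volume_eq_prod, ← Measure.prod_restrict, Measure.restrict_univ]
  have hfint' : Integrable (fun p : ℝ × ℝ => ‖φ p‖ ^ 2)
      ((volume : Measure ℝ).prod (volume.restrict (Set.Ioo (0:ℝ) δ))) := by
    rw [← hmeq]; exact hfint.restrict
  have hDint' : Integrable (fun p : ℝ × ℝ => ‖D p‖ ^ 2)
      ((volume : Measure ℝ).prod (volume.restrict (Set.Ioo (0:ℝ) δ))) := by
    rw [← hmeq]; exact hDint.restrict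
  -- Fubini on both sides
  have hLHS : (∫ p in (Set.univ ×ˢ Set.Ioo (0:ℝ) δ : Set (ℝ × ℝ)), ‖φ p‖ ^ 2)
      = ∫ s : ℝ, ∫ η in Set.Ioo (0:ℝ) δ, ‖φ (s, η)‖ ^ 2 := by
    rw [show (∫ p in (Set.univ ×ˢ Set.Ioo (0:ℝ) δ : Set (ℝ × ℝ)), ‖φ p‖ ^ 2)
        = ∫ p, ‖φ p‖ ^ 2 ∂((volume : Measure ℝ).prod (volume.restrict (Set.Ioo (0:ℝ) δ)))
        from by rw [← hmeq]]
    exact integral_prod _ hfint'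
  have hRHS : (∫ p in (Set.univ ×ˢ Set.Ioo (0:ℝ) δ : Set (ℝ × ℝ)), ‖D p‖ ^ 2)
      = ∫ s : ℝ, ∫ η in Set.Ioo (0:ℝ) δ, ‖D (s, η)‖ ^ 2 := by
    rw [show (∫ p in (Set.univ ×ˢ Set.Ioo (0:ℝ) δ : Set (ℝ × ℝ)), ‖D p‖ ^ 2)
        = ∫ p, ‖D p‖ ^ 2 ∂((volume : Measure ℝ).prod (volume.restrict (Set.Ioo (0:ℝ) δ)))
        from by rw [← hmeq]]
    exact integral_prod _ hDint'
  set F : ℝ → ℝ := fun s => ∫ η in Set.Ioo (0:ℝ) δ, ‖D (s, η)‖ ^ 2 with hF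
  set G : ℝ → ℝ := fun s => ∫ η in Set.Ioo (0:ℝ) δ, ‖φ (s, η)‖ ^ 2 with hG
  have hFnonneg : ∀ s, 0 ≤ F s := fun s => integral_nonneg fun x => sq_nonneg _
  -- per-slice estimate
  have hslice : ∀ s : ℝ, G s ≤ 2 * δ * ‖φ (s, 0)‖ ^ 2 + δ ^ 2 * F s := by
    intro s
    have hint1 : IntegrableOn (fun η => ‖φ (s, η)‖ ^ 2) (Set.Ioo (0:ℝ) δ) :=
      (((hφ.continuous.comp (continuous_const.prodMk continuous_id)).norm.pow 2
        ).integrableOn_Icc (a := 0) (b := δ)).mono_set Set.Ioo_subset_Icc_self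
    have hint2 : IntegrableOn (fun η : ℝ => 2 * ‖φ (s, 0)‖ ^ 2 + 2 * η * F s)
        (Set.Ioo (0:ℝ) δ) :=
      (((continuous_const.add ((continuous_const.mul continuous_id).mul continuous_const)
        ).integrableOn_Icc (a := 0) (b := δ))).mono_set Set.Ioo_subset_Icc_self
    have hb : G s ≤ ∫ η in Set.Ioo (0:ℝ) δ, (2 * ‖φ (s, 0)‖ ^ 2 + 2 * η * F s) := by
      refine setIntegral_mono_on hint1 hint2 measurableSet_Ioo fun η hη => ?_
      exact stmt5_pt δ hδ φ hφ hsupp s hη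
    have hval : ∫ η in Set.Ioo (0:ℝ) δ, (2 * ‖φ (s, 0)‖ ^ 2 + 2 * η * F s)
        = 2 * δ * ‖φ (s, 0)‖ ^ 2 + δ ^ 2 * F s := by
      rw [← integral_Ioc_eq_integral_Ioo, ← intervalIntegral.integral_of_le hδ.le]
      have : ∫ η in (0:ℝ)..δ, (2 * ‖φ (s, 0)‖ ^ 2 + 2 * η * F s)
          = (∫ η in (0:ℝ)..δ, 2 * ‖φ (s, 0)‖ ^ 2) + ∫ η in (0:ℝ)..δ, 2 * η * F s := by
        apply intervalIntegral.integral_add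
        · exact intervalIntegrable_const
        · exact ((continuous_const.mul continuous_id).mul continuous_const).intervalIntegrable 0 δ
      rw [this, intervalIntegral.integral_const]
      have : ∫ η in (0:ℝ)..δ, 2 * η * F s = 2 * F s * ∫ η in (0:ℝ)..δ, η := by
        rw [← intervalIntegral.integral_const_mul]
        congr 1; ext η; ring
      rw [this, integral_id]
      simp only [smul_eq_mul]
      ring
    rw [hval] at hb
    exact hb
  -- integrate the slice estimate over s
  have hGint : Integrable G := hfint'.integral_prod_left
  have hFint : Integrable F := hDint'.integral_prod_left
  have hemb0 := stmt5_emb0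
  have hb0int : Integrable (fun s : ℝ => ‖φ (s, 0)‖ ^ 2) := by
    refine ((hφ.continuous.comp (continuous_id.prodMk continuous_const)).norm.pow 2
      ).integrable_of_hasCompactSupport ?_
    have := (hsupp.comp_isClosedEmbedding hemb0).norm
    exact (this.comp_left (g := fun x : ℝ => x ^ 2) (by simp) :)
  have hmain : ∫ s, G s ≤ ∫ s, (2 * δ * ‖φ (s, 0)‖ ^ 2 + δ ^ 2 * F s) := by
    refine integral_mono hGint ?_ hslice
    exact (hb0int.const_mul _).add (hFint.const_mul _)
  have hsplit : ∫ s, (2 * δ * ‖φ (s, 0)‖ ^ 2 + δ ^ 2 * F s)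
      = 2 * δ * (∫ s, ‖φ (s, 0)‖ ^ 2) + δ ^ 2 * ∫ s, F s := by
    rw [integral_add (hb0int.const_mul _) (hFint.const_mul _),
      integral_const_mul, integral_const_mul]
  rw [hLHS, hRHS]
  rw [hsplit] at hmain
  exact hmain
end

section
/- Let δ > 0 and let G : ℝ → ℂ be a measurable function. Then ∫_ℝ ∫₀^δ ξ² · ( 2·sinh(ξ(η − δ))² + cosh(ξ(η − δ))² ) / cosh(ξδ)² · |G(ξ)|² dη dξ ≤ 2 · ∫_ℝ |ξ| · |G(ξ)|² dξ. -/
/-!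
Since `2 sinh² s + cosh² s = (3 cosh 2s - 1) / 2`, the inner integral has the closed form
`(3/4 ξ sinh 2ξδ - ξ²δ/2) / cosh² ξδ`, which is at most `3/2 ξ tanh ξδ ≤ 2 |ξ|`. So the
inequality holds pointwise in `ξ`, before integrating against `|G ξ|²`.
-/

open MeasureTheory Real

lemma hasDerivAt_sinh_cosh_sq_antideriv (ξ δ η : ℝ) :
    HasDerivAt (fun η => 3 / 4 * ξ * sinh (2 * (ξ * (η - δ))) - ξ ^ 2 * η / 2)
      (ξ ^ 2 * (2 * sinh (ξ * (η - δ)) ^ 2 + cosh (ξ * (η - δ)) ^ 2)) η := by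
  have hinner : HasDerivAt (fun η : ℝ => 2 * (ξ * (η - δ))) (2 * ξ) η := by
    simpa using (((hasDerivAt_id η).sub_const δ).const_mul ξ).const_mul 2
  have hlin : HasDerivAt (fun η : ℝ => ξ ^ 2 * η / 2) (ξ ^ 2 / 2) η := by
    simpa using ((hasDerivAt_id η).const_mul (ξ ^ 2)).div_const 2
  refine ((hinner.sinh.const_mul (3 / 4 * ξ)).sub hlin).congr_deriv ?_
  rw [cosh_two_mul, sinh_sq]
  ring

lemma integral_sinh_cosh_sq (ξ δ : ℝ) :
    ∫ η in (0 : ℝ)..δ, ξ ^ 2 * (2 * sinh (ξ * (η - δ)) ^ 2 + cosh (ξ * (η - δ)) ^ 2) =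
      3 / 4 * ξ * sinh (2 * (ξ * δ)) - ξ ^ 2 * δ / 2 := by
  rw [intervalIntegral.integral_eq_sub_of_hasDerivAt
    (fun η _ => hasDerivAt_sinh_cosh_sq_antideriv ξ δ η)
    (Continuous.intervalIntegrable (by fun_prop) _ _)]
  simp only [sub_self, mul_zero, sinh_zero, zero_sub, mul_neg, sinh_neg]
  ring

lemma mul_sinh_le_abs_mul_cosh (x y : ℝ) : x * sinh y ≤ |x| * cosh y :=
  calc x * sinh y ≤ |x| * |sinh y| := by rw [← abs_mul]; exact le_abs_self _
    _ ≤ |x| * cosh y := by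
      gcongr
      refine abs_le.2 ⟨?_, (sinh_lt_cosh y).le⟩
      linarith [sinh_lt_cosh (-y), sinh_neg y, cosh_neg y]

lemma sinh_two_mul_sub_le_abs_mul_cosh_sq (ξ : ℝ) {δ : ℝ} (hδ : 0 ≤ δ) :
    3 / 4 * ξ * sinh (2 * (ξ * δ)) - ξ ^ 2 * δ / 2 ≤ 2 * |ξ| * cosh (ξ * δ) ^ 2 := by
  have hsinh := mul_le_mul_of_nonneg_right (mul_sinh_le_abs_mul_cosh ξ (ξ * δ))
    (cosh_pos (ξ * δ)).le
  rw [sinh_two_mul]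
  nlinarith [mul_nonneg (abs_nonneg ξ) (sq_nonneg (cosh (ξ * δ))), mul_nonneg (sq_nonneg ξ) hδ]

lemma lintegral_sinh_cosh_sq_div_le (ξ : ℝ) {δ : ℝ} (hδ : 0 ≤ δ) :
    ∫⁻ η in Set.Ioo (0 : ℝ) δ, ENNReal.ofReal (ξ ^ 2 *
        (2 * sinh (ξ * (η - δ)) ^ 2 + cosh (ξ * (η - δ)) ^ 2) / cosh (ξ * δ) ^ 2) ≤
      ENNReal.ofReal (2 * |ξ|) := by
  have hcosh : 0 < cosh (ξ * δ) ^ 2 := by positivity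
  have hcont : Continuous fun η => ξ ^ 2 *
      (2 * sinh (ξ * (η - δ)) ^ 2 + cosh (ξ * (η - δ)) ^ 2) / cosh (ξ * δ) ^ 2 := by fun_prop
  rw [← ofReal_integral_eq_lintegral_ofReal
    ((hcont.integrableOn_Icc).mono_set Set.Ioo_subset_Icc_self)
    (Filter.Eventually.of_forall fun η => by positivity),
    ← integral_Ioc_eq_integral_Ioo, ← intervalIntegral.integral_of_le hδ,
    intervalIntegral.integral_div, integral_sinh_cosh_sq]
  exact ENNReal.ofReal_le_ofReal <|
    (div_le_iff₀ hcosh).2 (sinh_two_mul_sub_le_abs_mul_cosh_sq ξ hδ)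

theorem stmt_8_general (δ : ℝ) (hδ : 0 < δ) (G : ℝ → ℂ) :
    ∫⁻ ξ : ℝ, ∫⁻ η in Set.Ioo (0 : ℝ) δ,
        ENNReal.ofReal (ξ ^ 2 *
          (2 * Real.sinh (ξ * (η - δ)) ^ 2 + Real.cosh (ξ * (η - δ)) ^ 2) /
            Real.cosh (ξ * δ) ^ 2 * ‖G ξ‖ ^ 2) ≤
      2 * ∫⁻ ξ : ℝ, ENNReal.ofReal (|ξ| * ‖G ξ‖ ^ 2) := by
  rw [← lintegral_const_mul' 2 _ ENNReal.ofNat_ne_top]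
  refine lintegral_mono fun ξ => ?_
  simp_rw [ENNReal.ofReal_mul' (sq_nonneg ‖G ξ‖)]
  rw [lintegral_mul_const' _ _ ENNReal.ofReal_ne_top, ← mul_assoc]
  gcongr
  calc _ ≤ ENNReal.ofReal (2 * |ξ|) := lintegral_sinh_cosh_sq_div_le ξ hδ.le
    _ = 2 * ENNReal.ofReal |ξ| := by rw [ENNReal.ofReal_mul zero_le_two, ENNReal.ofReal_ofNat]

/-- For `δ > 0` and measurable `G : ℝ → ℂ`,
`∫_ℝ ∫₀^δ ξ² (2 sinh(ξ(η-δ))² + cosh(ξ(η-δ))²)/cosh(ξδ)² |G(ξ)|² dη dξ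
  ≤ 2 ∫_ℝ |ξ| |G(ξ)|² dξ`, understood in `[0, ∞]`. -/
theorem stmt_8 (δ : ℝ) (hδ : 0 < δ) (G : ℝ → ℂ) (hG : Measurable G) :
    ∫⁻ ξ : ℝ, ∫⁻ η in Set.Ioo (0 : ℝ) δ,
        ENNReal.ofReal (ξ ^ 2 *
          (2 * Real.sinh (ξ * (η - δ)) ^ 2 + Real.cosh (ξ * (η - δ)) ^ 2) /
            Real.cosh (ξ * δ) ^ 2 * ‖G ξ‖ ^ 2) ≤
      2 * ∫⁻ ξ : ℝ, ENNReal.ofReal (|ξ| * ‖G ξ‖ ^ 2) :=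
  stmt_8_general δ hδ G
end

section
/- There exists a constant C > 0 such that for every δ ∈ (0, 1] and every measurable function G : ℝ → ℂ, ∫_ℝ ∫₀^δ [ (1 + ξ²) · sinh(ξ(η − δ))² / ξ² + cosh(ξ(η − δ))² ] / cosh(ξδ)² · |G(ξ)|² dη dξ ≤ C · δ · ∫_ℝ (1 + ξ²)^{1/2} |G(ξ)|² dξ (the integrand is defined for ξ ≠ 0, and the point ξ = 0 is Lebesgue-null). -/
/-!
Write `t = η - δ`, so `|t| ≤ δ ≤ 1`. From `|sinh x| ≤ |x| cosh x` one gets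
`sinh (ξt)² ≤ ξ² cosh (ξδ)²`, and trivially `sinh (ξt)² ≤ cosh (ξt)² ≤ cosh (ξδ)²`; hence the kernel
`[(1 + ξ²) sinh (ξt)² / ξ² + cosh (ξt)²] / cosh (ξδ)²` is at most `3 ≤ 3 (1 + ξ²)^{1/2}`, uniformly
in `η`. Integrating over `η ∈ (0, δ)` gives the claim with `C = 3`.
-/

open MeasureTheory Real

lemma Real.sinh_le_mul_cosh {x : ℝ} (hx : 0 ≤ x) : sinh x ≤ x * cosh x := by
  have hderiv (y : ℝ) : HasDerivAt (fun y ↦ y * cosh y - sinh y) (y * sinh y) y :=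
    (((hasDerivAt_id' y).mul (hasDerivAt_cosh y)).sub (hasDerivAt_sinh y)).congr_deriv (by ring)
  have hmono : Monotone (fun y ↦ y * cosh y - sinh y) := by
    refine monotone_of_deriv_nonneg (fun y ↦ (hderiv y).differentiableAt) fun y ↦ ?_
    rw [(hderiv y).deriv]
    rcases le_total 0 y with hy | hy
    · exact mul_nonneg hy (sinh_nonneg_iff.mpr hy)
    · exact mul_nonneg_of_nonpos_of_nonpos hy (sinh_nonpos_iff.mpr hy)
  simpa using hmono hx

lemma Real.sinh_sq_le_sq_mul_cosh_sq (x : ℝ) : sinh x ^ 2 ≤ x ^ 2 * cosh x ^ 2 := by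
  have h := sinh_le_mul_cosh (abs_nonneg x)
  rw [cosh_abs, ← abs_sinh] at h
  simpa [mul_pow, sq_abs] using pow_le_pow_left₀ (abs_nonneg _) h 2

lemma one_add_sq_mul_sinh_sq_div_add_cosh_sq_le {ξ t s : ℝ} (hts : |t| ≤ s) (hs : s ≤ 1) :
    (1 + ξ ^ 2) * sinh (ξ * t) ^ 2 / ξ ^ 2 + cosh (ξ * t) ^ 2 ≤ 3 * cosh (ξ * s) ^ 2 := by
  have hs0 : 0 ≤ s := (abs_nonneg t).trans hts
  have hcosh : cosh (ξ * t) ^ 2 ≤ cosh (ξ * s) ^ 2 := by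
    refine pow_le_pow_left₀ (cosh_pos _).le (cosh_le_cosh.mpr ?_) 2
    rw [abs_mul, abs_mul, abs_of_nonneg hs0]
    gcongr
  have hsinh : sinh (ξ * t) ^ 2 ≤ cosh (ξ * s) ^ 2 := by
    nlinarith [cosh_sq (ξ * t)]
  have hsinh_small : sinh (ξ * t) ^ 2 ≤ ξ ^ 2 * cosh (ξ * s) ^ 2 :=
    calc sinh (ξ * t) ^ 2 ≤ ξ ^ 2 * t ^ 2 * cosh (ξ * t) ^ 2 := by
          simpa [mul_pow] using sinh_sq_le_sq_mul_cosh_sq (ξ * t)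
      _ ≤ ξ ^ 2 * 1 * cosh (ξ * s) ^ 2 := by
          gcongr
          exact sq_le_one_iff_abs_le_one t |>.mpr (hts.trans hs)
      _ = ξ ^ 2 * cosh (ξ * s) ^ 2 := by rw [mul_one]
  have hfirst : (1 + ξ ^ 2) * sinh (ξ * t) ^ 2 / ξ ^ 2 ≤ 2 * cosh (ξ * s) ^ 2 := by
    rcases eq_or_ne ξ 0 with rfl | hξ
    · simp only [ne_eq, OfNat.ofNat_ne_zero, not_false_eq_true, zero_pow, div_zero]
      positivity
    rw [div_le_iff₀ (by positivity)]
    nlinarith [mul_le_mul_of_nonneg_left hsinh (sq_nonneg ξ)]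
  linarith

/-- There is `C > 0` such that for all `δ ∈ (0,1]` and all measurable
`G : ℝ → ℂ`,
`∫_ℝ ∫₀^δ [(1+ξ²) sinh(ξ(η-δ))²/ξ² + cosh(ξ(η-δ))²]/cosh(ξδ)² |G(ξ)|² dη dξ
  ≤ C δ ∫_ℝ (1+ξ²)^{1/2} |G(ξ)|² dξ`, understood in `[0, ∞]`. -/
theorem stmt_9 :
    ∃ C : ℝ, 0 < C ∧ ∀ δ : ℝ, 0 < δ → δ ≤ 1 → ∀ G : ℝ → ℂ, Measurable G →
      ∫⁻ ξ : ℝ, ∫⁻ η in Set.Ioo (0 : ℝ) δ,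
          ENNReal.ofReal
            (((1 + ξ ^ 2) * Real.sinh (ξ * (η - δ)) ^ 2 / ξ ^ 2 +
                Real.cosh (ξ * (η - δ)) ^ 2) / Real.cosh (ξ * δ) ^ 2 *
              ‖G ξ‖ ^ 2) ≤
        ENNReal.ofReal (C * δ) *
          ∫⁻ ξ : ℝ, ENNReal.ofReal ((1 + ξ ^ 2) ^ ((1 : ℝ) / 2) * ‖G ξ‖ ^ 2) := by
  refine ⟨3, by norm_num, fun δ hδ hδ1 G _ ↦ ?_⟩
  rw [← lintegral_const_mul' _ _ ENNReal.ofReal_ne_top]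
  refine lintegral_mono fun ξ ↦ ?_
  have hkernel : ∀ η ∈ Set.Ioo 0 δ,
      ((1 + ξ ^ 2) * sinh (ξ * (η - δ)) ^ 2 / ξ ^ 2 + cosh (ξ * (η - δ)) ^ 2) /
        cosh (ξ * δ) ^ 2 ≤ 3 * (1 + ξ ^ 2) ^ ((1 : ℝ) / 2) := fun η hη ↦ by
    have hηδ : |η - δ| ≤ δ := abs_le.mpr ⟨by linarith [hη.1], by linarith [hη.2]⟩
    refine (div_le_of_le_mul₀ (by positivity) (by norm_num)
      (one_add_sq_mul_sinh_sq_div_add_cosh_sq_le hηδ hδ1)).trans ?_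
    exact le_mul_of_one_le_right (by norm_num) (one_le_rpow (by nlinarith) (by norm_num))
  calc _ ≤ ∫⁻ _ in Set.Ioo 0 δ, ENNReal.ofReal (3 * (1 + ξ ^ 2) ^ ((1 : ℝ) / 2) * ‖G ξ‖ ^ 2) :=
        setLIntegral_mono' measurableSet_Ioo fun η hη ↦
          ENNReal.ofReal_le_ofReal (mul_le_mul_of_nonneg_right (hkernel η hη) (by positivity))
    _ = _ := by
      rw [setLIntegral_const, Real.volume_Ioo, sub_zero, ← ENNReal.ofReal_mul (by positivity),
        ← ENNReal.ofReal_mul (by positivity)]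
      ring_nf
end

section
/- Let G : ℝ → ℂ be a measurable function such that ∫_ℝ |ξ| · |G(ξ)|² dξ < ∞. Then ∫_ℝ ∫₀^δ ξ² · ( 2·sinh(ξ(η − δ))² + cosh(ξ(η − δ))² ) / cosh(ξδ)² · |G(ξ)|² dη dξ tends to 0 as δ → 0⁺. -/
/-!
By dominated convergence in `ξ`. With `a = ξ (η - δ)` and `b = ξ δ` we have `|a| ≤ |b|` for
`0 < η < δ`, so the integrand is at most `3 ξ² |G ξ|²` and the inner integral is `O(δ)` for each
fixed `ξ`. Uniformly in `δ`, the estimates `cosh a ≤ exp |a|` and `exp |b| ≤ 2 cosh b` bound the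
integrand by `12 ξ² exp (-2 |ξ| η) |G ξ|²`, whose integral in `η` is at most `6 |ξ| |G ξ|²`, an
integrable majorant.
-/

open MeasureTheory Filter
open Real Set Topology ENNReal

lemma cosh_le_exp_abs (x : ℝ) : cosh x ≤ exp |x| := by
  rw [← cosh_abs, cosh_eq]
  have := exp_le_exp.mpr (neg_le_self (abs_nonneg x))
  linarith

lemma exp_abs_le_two_mul_cosh (x : ℝ) : exp |x| ≤ 2 * cosh x := by
  rw [cosh_eq]
  linarith [exp_abs_le x]

lemma cosh_div_cosh_le (x y : ℝ) : cosh x / cosh y ≤ 2 * exp (|x| - |y|) := by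
  rw [div_le_iff₀ (cosh_pos y)]
  calc cosh x ≤ exp |x| := cosh_le_exp_abs x
    _ = exp (|x| - |y|) * exp |y| := by rw [← exp_add, sub_add_cancel]
    _ ≤ exp (|x| - |y|) * (2 * cosh y) := by gcongr; exact exp_abs_le_two_mul_cosh y
    _ = 2 * exp (|x| - |y|) * cosh y := by ring

lemma two_mul_sinh_sq_add_cosh_sq_le (x : ℝ) :
    2 * sinh x ^ 2 + cosh x ^ 2 ≤ 3 * cosh x ^ 2 := by
  rw [sinh_sq]; linarith

lemma lintegral_Ioi_exp_neg_mul {b : ℝ} (hb : 0 < b) :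
    ∫⁻ x in Ioi 0, ENNReal.ofReal (exp (-(b * x))) = ENNReal.ofReal b⁻¹ := by
  have h := integral_exp_mul_Ioi (neg_neg_of_pos hb) 0
  simp only [mul_zero, exp_zero, neg_mul] at h
  rw [← ofReal_integral_eq_lintegral_ofReal
    (by simpa [IntegrableOn] using exp_neg_integrableOn_Ioi 0 hb)
    (.of_forall fun _ => (exp_pos _).le), h, neg_div_neg_eq, one_div]

noncomputable def sinhCoshKernel (δ ξ η : ℝ) : ℝ :=
  ξ ^ 2 * (2 * sinh (ξ * (η - δ)) ^ 2 + cosh (ξ * (η - δ)) ^ 2) / cosh (ξ * δ) ^ 2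

lemma sinhCoshKernel_le {δ ξ η : ℝ} (h : |η - δ| ≤ |δ|) :
    sinhCoshKernel δ ξ η ≤ 3 * ξ ^ 2 := by
  have hcosh : cosh (ξ * (η - δ)) ^ 2 ≤ cosh (ξ * δ) ^ 2 := by
    gcongr
    rw [cosh_le_cosh, abs_mul, abs_mul]; gcongr
  rw [sinhCoshKernel, mul_div_assoc, mul_comm 3]
  gcongr
  rw [div_le_iff₀ (by positivity)]
  linarith [two_mul_sinh_sq_add_cosh_sq_le (ξ * (η - δ))]

lemma sinhCoshKernel_le_exp {δ ξ η : ℝ} (hη : 0 ≤ η) (hηδ : η ≤ δ) :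
    sinhCoshKernel δ ξ η ≤ 12 * ξ ^ 2 * exp (-(2 * |ξ| * η)) := by
  have habs : |ξ * (η - δ)| - |ξ * δ| = -(|ξ| * η) := by
    rw [abs_mul, abs_mul, abs_of_nonpos (sub_nonpos.2 hηδ), abs_of_nonneg (hη.trans hηδ)]; ring
  have hratio : (cosh (ξ * (η - δ)) / cosh (ξ * δ)) ^ 2 ≤ 4 * exp (-(2 * |ξ| * η)) := by
    calc _ ≤ (2 * exp (-(|ξ| * η))) ^ 2 := by
          gcongr
          exact habs ▸ cosh_div_cosh_le _ _
      _ = 4 * exp (-(2 * |ξ| * η)) := by rw [mul_pow, ← exp_nat_mul]; ring_nf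
  calc sinhCoshKernel δ ξ η ≤ ξ ^ 2 * (3 * cosh (ξ * (η - δ)) ^ 2) / cosh (ξ * δ) ^ 2 := by
        unfold sinhCoshKernel
        gcongr
        exact two_mul_sinh_sq_add_cosh_sq_le _
    _ = 3 * ξ ^ 2 * (cosh (ξ * (η - δ)) / cosh (ξ * δ)) ^ 2 := by ring
    _ ≤ 3 * ξ ^ 2 * (4 * exp (-(2 * |ξ| * η))) := by gcongr
    _ = 12 * ξ ^ 2 * exp (-(2 * |ξ| * η)) := by ring

lemma lintegral_sinhCoshKernel_le_mul {δ : ℝ} (hδ : 0 ≤ δ) (ξ : ℝ) :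
    ∫⁻ η in Ioo 0 δ, ENNReal.ofReal (sinhCoshKernel δ ξ η) ≤ ENNReal.ofReal (3 * ξ ^ 2 * δ) := by
  calc ∫⁻ η in Ioo 0 δ, ENNReal.ofReal (sinhCoshKernel δ ξ η)
      ≤ ∫⁻ _ in Ioo 0 δ, ENNReal.ofReal (3 * ξ ^ 2) := by
        refine setLIntegral_mono measurable_const fun η hη => ENNReal.ofReal_le_ofReal ?_
        refine sinhCoshKernel_le ?_
        rw [abs_of_nonpos (by linarith [hη.2]), abs_of_nonneg hδ]
        linarith [hη.1]
    _ = ENNReal.ofReal (3 * ξ ^ 2 * δ) := by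
        rw [setLIntegral_const, Real.volume_Ioo, sub_zero, ← ENNReal.ofReal_mul (by positivity)]

lemma lintegral_sinhCoshKernel_le_abs (δ ξ : ℝ) :
    ∫⁻ η in Ioo 0 δ, ENNReal.ofReal (sinhCoshKernel δ ξ η) ≤ 6 * ENNReal.ofReal |ξ| := by
  rcases eq_or_ne ξ 0 with rfl | hξ
  · simp [sinhCoshKernel]
  have hξ' : 0 < 2 * |ξ| := by positivity
  calc ∫⁻ η in Ioo 0 δ, ENNReal.ofReal (sinhCoshKernel δ ξ η)
      ≤ ∫⁻ η in Ioo 0 δ, ENNReal.ofReal (12 * ξ ^ 2) * ENNReal.ofReal (exp (-(2 * |ξ| * η))) := by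
        refine setLIntegral_mono (by fun_prop) fun η hη => ?_
        rw [← ENNReal.ofReal_mul (by positivity)]
        exact ENNReal.ofReal_le_ofReal (sinhCoshKernel_le_exp hη.1.le hη.2.le)
    _ ≤ ∫⁻ η in Ioi 0, ENNReal.ofReal (12 * ξ ^ 2) * ENNReal.ofReal (exp (-(2 * |ξ| * η))) :=
        lintegral_mono_set Ioo_subset_Ioi_self
    _ = ENNReal.ofReal (12 * ξ ^ 2) * ENNReal.ofReal (2 * |ξ|)⁻¹ := by
        rw [lintegral_const_mul' _ _ ofReal_ne_top, lintegral_Ioi_exp_neg_mul hξ']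
    _ = 6 * ENNReal.ofReal |ξ| := by
        rw [← ENNReal.ofReal_mul (by positivity), ← sq_abs, ← ENNReal.ofReal_ofNat 6,
          ← ENNReal.ofReal_mul (by norm_num)]
        congr 1
        field_simp
        ring

lemma tendsto_lintegral_sinhCoshKernel (ξ : ℝ) :
    Tendsto (fun δ => ∫⁻ η in Ioo 0 δ, ENNReal.ofReal (sinhCoshKernel δ ξ η)) (𝓝[>] 0) (𝓝 0) := by
  have hlin : Tendsto (fun δ : ℝ => ENNReal.ofReal (3 * ξ ^ 2 * δ)) (𝓝[>] 0) (𝓝 0) := by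
    refine tendsto_nhdsWithin_of_tendsto_nhds ?_
    simpa [Function.comp_def] using
      (ENNReal.continuous_ofReal.comp (continuous_const_mul (3 * ξ ^ 2))).tendsto 0
  refine tendsto_of_tendsto_of_tendsto_of_le_of_le' tendsto_const_nhds hlin
    (.of_forall fun _ => zero_le) ?_
  filter_upwards [self_mem_nhdsWithin] with δ hδ
  exact lintegral_sinhCoshKernel_le_mul (le_of_lt hδ) ξ

lemma measurable_lintegral_sinhCoshKernel (δ : ℝ) :
    Measurable fun ξ => ∫⁻ η in Ioo 0 δ, ENNReal.ofReal (sinhCoshKernel δ ξ η) := by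
  refine Measurable.lintegral_prod_right' (ν := volume.restrict (Ioo 0 δ))
    (f := Function.uncurry fun ξ η => ENNReal.ofReal (sinhCoshKernel δ ξ η)) ?_
  unfold sinhCoshKernel
  fun_prop

/-- If `G : ℝ → ℂ` is measurable with `∫_ℝ |ξ| |G(ξ)|² dξ < ∞`, then
`∫_ℝ ∫₀^δ ξ² (2 sinh(ξ(η-δ))² + cosh(ξ(η-δ))²)/cosh(ξδ)² |G(ξ)|² dη dξ → 0`
as `δ → 0⁺`. -/
theorem stmt_10 (G : ℝ → ℂ) (hG : Measurable G)
    (hint : ∫⁻ ξ : ℝ, ENNReal.ofReal (|ξ| * ‖G ξ‖ ^ 2) < ⊤) :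
    Tendsto (fun δ : ℝ =>
        ∫⁻ ξ : ℝ, ∫⁻ η in Set.Ioo (0 : ℝ) δ,
          ENNReal.ofReal (ξ ^ 2 *
            (2 * Real.sinh (ξ * (η - δ)) ^ 2 + Real.cosh (ξ * (η - δ)) ^ 2) /
              Real.cosh (ξ * δ) ^ 2 * ‖G ξ‖ ^ 2))
      (nhdsWithin 0 (Set.Ioi 0)) (nhds 0) := by
  change Tendsto (fun δ => ∫⁻ ξ, ∫⁻ η in Ioo 0 δ,
    ENNReal.ofReal (sinhCoshKernel δ ξ η * ‖G ξ‖ ^ 2)) (𝓝[>] 0) (𝓝 0)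
  simp_rw [ENNReal.ofReal_mul' (sq_nonneg _), lintegral_mul_const' _ _ ofReal_ne_top]
  have hbound : ∫⁻ ξ, 6 * ENNReal.ofReal |ξ| * ENNReal.ofReal (‖G ξ‖ ^ 2) ≠ ⊤ := by
    simp_rw [mul_assoc, ← ENNReal.ofReal_mul (abs_nonneg _)]
    rw [lintegral_const_mul' _ _ (by norm_num)]
    exact mul_ne_top (by norm_num) hint.ne
  simpa only [Pi.zero_apply, lintegral_zero] using
    tendsto_lintegral_filter_of_dominated_convergence (f := 0) (F := fun δ ξ =>
        (∫⁻ η in Ioo 0 δ, ENNReal.ofReal (sinhCoshKernel δ ξ η)) * ENNReal.ofReal (‖G ξ‖ ^ 2))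
      (fun ξ => 6 * ENNReal.ofReal |ξ| * ENNReal.ofReal (‖G ξ‖ ^ 2))
      (.of_forall fun δ => (measurable_lintegral_sinhCoshKernel δ).mul (by fun_prop))
      (.of_forall fun δ => .of_forall fun ξ =>
        mul_le_mul_left (lintegral_sinhCoshKernel_le_abs δ ξ) _)
      hbound
      (.of_forall fun ξ => by
        simpa only [Pi.zero_apply, zero_mul] using
          ENNReal.Tendsto.mul_const (tendsto_lintegral_sinhCoshKernel ξ) (.inr ofReal_ne_top))
end
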